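/- arXiv:2506.17235 — 3 statements merged into one kernel-verified Lean document; each statement's English description precedes it below -/
import Mathlib

section
/- For any odd prime p, the sum over m from 0 to p-1 of the fourth power of the absolute value of the Kloosterman sum ∑_{a=1}^{p-1} e((a + m·ā)/p) equals 2p³ − 3p² − 3p, where ā denotes the multiplicative inverse of a modulo p and e(y) = e^{2πiy}. -/
/-!
Expanding `K(m)² = ∑_{x,y ≠ 0} e(x + y) e(m (1/x + 1/y))` and applying Parseval in `m` gives
`∑_m |K(m)|⁴ = q ∑_r |∑_{1/x + 1/y = r} e(x + y)|²`; inverting `x, y` turns the inner sum into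
`g(r) = ∑_{x + y = r} e(1/x + 1/y)`. Here `g(0) = q - 1`, and for `r ≠ 0` the scaling
`(x, y) ↦ r (x, y)` gives `g(r) = h(1/r)` with `h(m) = ∑_{x + y = 1} e(m (1/x + 1/y))`.
A second use of Parseval gives `∑_m |h(m)|² = q · #{(z, y) : z, y on x + y = 1, z₁z₂ = y₁y₂}`,
and the solutions are `z = y` and `z = y.swap`, which coincide only at `(1/2, 1/2)`.
Altogether `∑_m |K(m)|⁴ = q ((q - 1)² - (q - 2)² + q (2 (q - 2) - 1)) = 2q³ - 3q² - 3q`.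
-/

open Finset Complex

namespace AddChar

variable {R ι : Type*} [CommRing R] [Fintype R] [DecidableEq R] {ψ : AddChar R ℂ}

theorem IsPrimitive.sum_norm_sq_sum_mul_apply (hψ : ψ.IsPrimitive) (c : R → ℂ) :
    ∑ m : R, ‖∑ r, c r * ψ (m * r)‖ ^ 2 = Fintype.card R * ∑ r, ‖c r‖ ^ 2 := by
  have hR : 0 < ringChar R := Nat.pos_of_ne_zero (CharP.ringChar_ne_zero_of_finite R)
  have conj_apply (x : R) : (starRingEnd ℂ) (ψ x) = ψ (-x) := by
    rw [starComp_apply hR, inv_apply]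
  apply ofReal_injective
  push_cast
  calc ∑ m : R, ((‖∑ r, c r * ψ (m * r)‖ : ℂ) ^ 2)
      = ∑ r, ∑ t, c r * (starRingEnd ℂ) (c t) * ∑ m : R, ψ (m * (r - t)) := by
        simp_rw [← mul_conj', map_sum, map_mul, conj_apply, sum_mul_sum, mul_sum]
        rw [sum_comm]
        refine sum_congr rfl fun r _ => ?_
        rw [sum_comm]
        refine sum_congr rfl fun t _ => sum_congr rfl fun m _ => ?_
        rw [mul_sub, sub_eq_add_neg, map_add_eq_mul]
        ring
    _ = Fintype.card R * ∑ r, c r * (starRingEnd ℂ) (c r) := by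
        simp_rw [sum_mulShift _ hψ, sub_eq_zero, Nat.cast_ite, Nat.cast_zero, mul_ite, mul_zero,
          Fintype.sum_ite_eq, mul_sum]
        exact sum_congr rfl fun r _ => mul_comm _ _
    _ = Fintype.card R * ∑ r, ((‖c r‖ : ℂ) ^ 2) := by
        simp_rw [mul_conj']

theorem IsPrimitive.sum_norm_sq_sum_mul_apply_fiberwise (hψ : ψ.IsPrimitive) (s : Finset ι)
    (w : ι → ℂ) (f : ι → R) :
    ∑ m : R, ‖∑ i ∈ s, w i * ψ (m * f i)‖ ^ 2
      = Fintype.card R * ∑ r, ‖∑ i ∈ s with f i = r, w i‖ ^ 2 := by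
  rw [← hψ.sum_norm_sq_sum_mul_apply]
  congr! 3 with m
  rw [← sum_fiberwise s f]
  refine sum_congr rfl fun r _ => ?_
  rw [sum_mul]
  exact sum_congr rfl fun i hi => by rw [(mem_filter.1 hi).2]

end AddChar

lemma Finset.sum_card_filter_eq_sq {ι κ : Type*} [Fintype κ] [DecidableEq κ] (s : Finset ι)
    (f : ι → κ) : ∑ k, #{i ∈ s | f i = k} ^ 2 = ∑ i ∈ s, #{j ∈ s | f j = f i} := by
  rw [← sum_fiberwise' s f fun k => #{j ∈ s | f j = k}]
  simp only [sum_const, smul_eq_mul, sq]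

lemma ZMod.sum_range_natCast {M : Type*} [AddCommMonoid M] (n : ℕ) [NeZero n]
    (f : ZMod n → M) : ∑ a ∈ range n, f a = ∑ x, f x :=
  sum_nbij' (↑) ZMod.val (fun _ _ => mem_univ _) (fun x _ => mem_range.2 x.val_lt)
    (fun _ ha => ZMod.val_cast_of_lt (mem_range.1 ha)) (fun x _ => ZMod.natCast_zmod_val x)
    fun _ _ => rfl

lemma ZMod.sum_Icc_natCast {M : Type*} [AddCommMonoid M] (n : ℕ) [NeZero n]
    (f : ZMod n → M) : ∑ a ∈ Icc 1 (n - 1), f a = ∑ x ∈ {0}ᶜ, f x := by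
  refine sum_nbij' (↑) ZMod.val (fun a ha => ?_) (fun x hx => ?_)
    (fun a ha => ZMod.val_cast_of_lt ?_) (fun x _ => ZMod.natCast_zmod_val x) fun _ _ => rfl
  · rw [mem_Icc] at ha
    rw [mem_compl, mem_singleton, ZMod.natCast_eq_zero_iff]
    exact Nat.not_dvd_of_pos_of_lt ha.1 (by omega)
  · rw [mem_compl, mem_singleton, ← Ne, ← ZMod.val_ne_zero] at hx
    rw [mem_Icc]
    have := x.val_lt
    omega
  · rw [mem_Icc] at ha
    omega

section Kloosterman

variable {F : Type*} [Field F] [Fintype F] [DecidableEq F]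

def kloosterman (ψ : AddChar F ℂ) (m : F) : ℂ := ∑ a ∈ ({0}ᶜ : Finset F), ψ (a + m * a⁻¹)

variable (F) in
def nonzeroPairs : Finset (F × F) := {0}ᶜ ×ˢ {0}ᶜ

def reciprocalSum (ψ : AddChar F ℂ) (r m : F) : ℂ :=
  ∑ x ∈ nonzeroPairs F with x.1 + x.2 = r, ψ (m * (x.1⁻¹ + x.2⁻¹))

variable {ψ : AddChar F ℂ}

lemma kloosterman_sq (m : F) :
    kloosterman ψ m ^ 2 = ∑ x ∈ nonzeroPairs F, ψ (x.1 + x.2) * ψ (m * (x.1⁻¹ + x.2⁻¹)) := by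
  rw [sq, kloosterman, sum_mul_sum, ← sum_product', nonzeroPairs]
  refine sum_congr rfl fun x _ => ?_
  rw [← AddChar.map_add_eq_mul, ← AddChar.map_add_eq_mul]
  congr 1
  ring

lemma sum_filter_inv_add_inv_eq (r : F) :
    ∑ x ∈ nonzeroPairs F with x.1⁻¹ + x.2⁻¹ = r, ψ (x.1 + x.2) = reciprocalSum ψ r 1 := by
  refine sum_equiv (Equiv.inv _) (fun x => ?_) (fun x _ => ?_)
  · simp [nonzeroPairs]
  · simp

lemma card_filter_add_eq (r : F) :
    #{x ∈ nonzeroPairs F | x.1 + x.2 = r} = #({0, r}ᶜ : Finset F) := by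
  refine card_nbij' Prod.fst (fun a => (a, r - a)) (fun x hx => ?_) (fun a ha => ?_)
    (fun x hx => ?_) (fun a _ => rfl) <;> simp_all [nonzeroPairs] <;> grind

lemma reciprocalSum_zero_left (m : F) : reciprocalSum ψ 0 m = (Fintype.card F - 1 : ℕ) := by
  have hterm : ∀ x ∈ {x ∈ nonzeroPairs F | x.1 + x.2 = 0}, ψ (m * (x.1⁻¹ + x.2⁻¹)) = 1 := by
    intro x hx
    rw [eq_neg_of_add_eq_zero_right (mem_filter.1 hx).2, inv_neg, add_neg_cancel, mul_zero,
      AddChar.map_zero_eq_one]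
  rw [reciprocalSum, sum_congr rfl hterm, sum_const, card_filter_add_eq, pair_eq_singleton,
    card_compl, card_singleton, nsmul_one]

lemma reciprocalSum_one_zero : reciprocalSum ψ 1 0 = (Fintype.card F - 2 : ℕ) := by
  simp_rw [reciprocalSum, zero_mul, AddChar.map_zero_eq_one, sum_const, card_filter_add_eq,
    card_compl, card_pair zero_ne_one, nsmul_one]

lemma reciprocalSum_of_ne_zero {r : F} (hr : r ≠ 0) (m : F) :
    reciprocalSum ψ r m = reciprocalSum ψ 1 (m * r⁻¹) := by
  refine sum_nbij' (r⁻¹ • ·) (r • ·) (fun x hx => ?_) (fun y hy => ?_) (fun x _ => ?_)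
    (fun y _ => ?_) (fun x hx => ?_)
  all_goals simp_all [nonzeroPairs]
  · rw [← mul_add, hx.2, inv_mul_cancel₀ hr]
  · rw [← mul_add, hy.2, mul_one]
  · congr 1
    field_simp

lemma filter_inv_add_inv_eq_pair_swap {y : F × F}
    (hy : y ∈ {y ∈ nonzeroPairs F | y.1 + y.2 = 1}) :
    {z ∈ nonzeroPairs F | z.1 + z.2 = 1 ∧ z.1⁻¹ + z.2⁻¹ = y.1⁻¹ + y.2⁻¹} = {y, y.swap} := by
  simp only [nonzeroPairs, mem_filter, mem_product, mem_compl, mem_singleton] at hy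
  obtain ⟨⟨hy1, hy2⟩, hysum⟩ := hy
  ext z
  simp only [nonzeroPairs, mem_filter, mem_product, mem_compl, mem_singleton, mem_insert]
  constructor
  · rintro ⟨⟨hz1, hz2⟩, hzsum, hzinv⟩
    have inv_add_inv_of_add_eq_one {a b : F} (ha : a ≠ 0) (hb : b ≠ 0) (hab : a + b = 1) :
        a⁻¹ + b⁻¹ = (a * b)⁻¹ := by
      field_simp
      linear_combination hab
    have hprod : z.1 * z.2 = y.1 * y.2 := by
      rwa [inv_add_inv_of_add_eq_one hz1 hz2 hzsum, inv_add_inv_of_add_eq_one hy1 hy2 hysum,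
        inv_inj] at hzinv
    -- `z.1` and `y.1` are roots of the same quadratic `X² - X + y.1 y.2`.
    have hroot : (z.1 - y.1) * (z.1 - y.2) = 0 := by
      linear_combination z.1 * hzsum - z.1 * hysum - hprod
    rcases mul_eq_zero.1 hroot with h | h
    · exact Or.inl (Prod.ext (by linear_combination h) (by linear_combination hzsum - hysum - h))
    · exact Or.inr (Prod.ext (by simp only [Prod.fst_swap]; linear_combination h)
        (by simp only [Prod.snd_swap]; linear_combination hzsum - hysum - h))
  · rintro (rfl | rfl)
    · exact ⟨⟨hy1, hy2⟩, hysum, rfl⟩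
    · exact ⟨⟨hy2, hy1⟩, by simpa [add_comm] using hysum, add_comm _ _⟩

lemma card_filter_add_eq_one_and_fst_eq_snd (h2 : (2 : F) ≠ 0) :
    #{y ∈ nonzeroPairs F | y.1 + y.2 = 1 ∧ y.1 = y.2} = 1 := by
  rw [card_eq_one]
  refine ⟨(2⁻¹, 2⁻¹), Finset.ext fun y => ?_⟩
  simp only [nonzeroPairs, mem_filter, mem_product, mem_compl, mem_singleton]
  constructor
  · rintro ⟨-, hsum, hdiag⟩
    have : y.1 = 2⁻¹ := eq_inv_of_mul_eq_one_left (by linear_combination hsum + hdiag)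
    exact Prod.ext this (hdiag ▸ this)
  · rintro rfl
    exact ⟨⟨inv_ne_zero h2, inv_ne_zero h2⟩, by rw [← two_mul, mul_inv_cancel₀ h2], rfl⟩

lemma sum_card_pair_swap_add_one (h2 : (2 : F) ≠ 0) :
    ∑ y ∈ nonzeroPairs F with y.1 + y.2 = 1, #{y, y.swap} + 1 = 2 * (Fintype.card F - 2) := by
  have hcard : ∀ y : F × F, #{y, y.swap} + (if y.1 = y.2 then 1 else 0) = 2 := by
    intro y
    by_cases h : y.1 = y.2
    · rw [show y.swap = y from Prod.ext h.symm h, pair_eq_singleton, card_singleton, if_pos h]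
    · rw [card_pair fun e => h (congrArg Prod.fst e), if_neg h]
  have := sum_congr rfl fun y (_ : y ∈ {y ∈ nonzeroPairs F | y.1 + y.2 = 1}) => hcard y
  rw [sum_add_distrib, ← card_filter, filter_filter,
    card_filter_add_eq_one_and_fst_eq_snd h2, sum_const, card_filter_add_eq, card_compl,
    card_pair zero_ne_one, smul_eq_mul] at this
  omega

lemma sum_norm_sq_reciprocalSum_one (hψ : ψ.IsPrimitive) (h2 : (2 : F) ≠ 0) :
    ∑ m, ‖reciprocalSum ψ 1 m‖ ^ 2
      = Fintype.card F * (2 * ((Fintype.card F : ℝ) - 2) - 1) := by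
  set V := {y ∈ nonzeroPairs F | y.1 + y.2 = 1}
  have hsum : ∀ m, reciprocalSum ψ 1 m = ∑ y ∈ V, 1 * ψ (m * (y.1⁻¹ + y.2⁻¹)) := fun m => by
    simp_rw [one_mul]
    rfl
  simp_rw [hsum, hψ.sum_norm_sq_sum_mul_apply_fiberwise, sum_const, nsmul_one, norm_natCast]
  congr 1
  have hfiber : ∀ y ∈ V, #{z ∈ V | z.1⁻¹ + z.2⁻¹ = y.1⁻¹ + y.2⁻¹} = #{y, y.swap} := by
    intro y hy
    rw [filter_filter, filter_inv_add_inv_eq_pair_swap hy]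
  have hcount := congrArg (Nat.cast : ℕ → ℝ) (sum_card_pair_swap_add_one h2)
  push_cast [Nat.cast_sub (Fintype.one_lt_card : 1 < Fintype.card F)] at hcount
  simp_rw [← Nat.cast_pow, ← Nat.cast_sum, sum_card_filter_eq_sq, sum_congr rfl hfiber]
  push_cast
  linarith

lemma sum_norm_sq_reciprocalSum_left (hψ : ψ.IsPrimitive) (h2 : (2 : F) ≠ 0) :
    ∑ r, ‖reciprocalSum ψ r 1‖ ^ 2
      = 2 * (Fintype.card F : ℝ) ^ 2 - 3 * Fintype.card F - 3 := by
  have hq : 1 < Fintype.card F := Fintype.one_lt_card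
  have hsplit : ∀ r : F, ‖reciprocalSum ψ r 1‖ ^ 2 = ‖reciprocalSum ψ 1 r⁻¹‖ ^ 2
      + if r = 0 then ((Fintype.card F : ℝ) - 1) ^ 2 - ((Fintype.card F : ℝ) - 2) ^ 2 else 0 := by
    intro r
    by_cases hr : r = 0
    · rw [if_pos hr, hr, inv_zero, reciprocalSum_zero_left, reciprocalSum_one_zero,
        norm_natCast, norm_natCast, Nat.cast_sub hq.le, Nat.cast_sub hq]
      push_cast
      ring
    · rw [if_neg hr, add_zero, reciprocalSum_of_ne_zero hr, one_mul]
  rw [sum_congr rfl fun r _ => hsplit r, sum_add_distrib, sum_ite_eq', if_pos (mem_univ _),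
    Fintype.sum_equiv (Equiv.inv F) (fun r => ‖reciprocalSum ψ 1 r⁻¹‖ ^ 2)
      (fun m => ‖reciprocalSum ψ 1 m‖ ^ 2) fun _ => rfl,
    sum_norm_sq_reciprocalSum_one hψ h2]
  ring

theorem sum_norm_pow_four_kloosterman (hψ : ψ.IsPrimitive) (h2 : (2 : F) ≠ 0) :
    ∑ m, ‖kloosterman ψ m‖ ^ 4
      = 2 * (Fintype.card F : ℝ) ^ 3 - 3 * (Fintype.card F : ℝ) ^ 2 - 3 * Fintype.card F := by
  have hpow : ∀ z : ℂ, ‖z‖ ^ 4 = ‖z ^ 2‖ ^ 2 := fun z => by rw [norm_pow, ← pow_mul]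
  simp_rw [hpow, kloosterman_sq, hψ.sum_norm_sq_sum_mul_apply_fiberwise,
    sum_filter_inv_add_inv_eq, sum_norm_sq_reciprocalSum_left hψ h2]
  ring

end Kloosterman

lemma sum_Icc_exp_eq_kloosterman (p : ℕ) [Fact p.Prime] (m : ℕ) :
    ∑ a ∈ Icc 1 (p - 1),
        cexp (2 * Real.pi * I * ((a : ℂ) + (m : ℂ) * (((a : ZMod p)⁻¹).val : ℂ)) / p)
      = kloosterman ZMod.stdAddChar (m : ZMod p) := by
  rw [kloosterman, ← ZMod.sum_Icc_natCast]
  refine sum_congr rfl fun a _ => ?_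
  have hcast : ((a + m * ((a : ZMod p)⁻¹).val : ℕ) : ZMod p) = a + m * (a : ZMod p)⁻¹ := by
    push_cast [ZMod.natCast_val, ZMod.cast_id]
    rfl
  rw [← hcast, ZMod.stdAddChar_apply, ZMod.toCircle_natCast]
  push_cast
  rfl

theorem stmt0 (p : ℕ) (hp : p.Prime) (hodd : Odd p) :
    ∑ m ∈ Finset.range p,
      (‖∑ a ∈ Finset.Icc 1 (p - 1),
        Complex.exp (2 * Real.pi * Complex.I * ((a : ℂ) + (m : ℂ) * (((a : ZMod p)⁻¹).val : ℂ)) / p)‖) ^ 4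
    = 2 * (p : ℝ) ^ 3 - 3 * (p : ℝ) ^ 2 - 3 * (p : ℝ) := by
  have := Fact.mk hp
  have hp2 : p ≠ 2 := by
    rintro rfl
    exact Nat.not_odd_iff_even.2 even_two hodd
  have h2 : (2 : ZMod p) ≠ 0 := Ring.two_ne_zero (by rwa [ZMod.ringChar_zmod_n])
  simp_rw [sum_Icc_exp_eq_kloosterman]
  rw [ZMod.sum_range_natCast p fun m => ‖kloosterman ZMod.stdAddChar m‖ ^ 4,
    sum_norm_pow_four_kloosterman (ZMod.isPrimitive_stdAddChar p) h2, ZMod.card]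
end

section
/- For any odd prime p, one has the identity ((−1/p)) · ∑_{c=1}^{p-1} ((c³ + c² + c)/p) − ∑_{b=1}^{p-1} (((b²+1)(b²+4b+1))/p) = 2, where (·/p) denotes the Legendre symbol. -/
/-!
Write `χ` for the quadratic character. Substituting `t = x + x⁻¹` turns a sum over `x ≠ 0` of a
function of `t` into a sum over `t` weighted by the number `1 + χ (t ^ 2 - 4)` of preimages.
Applied to `χ (x ^ 3 - x ^ 2 + x) = χ (x + x⁻¹ - 1)` and to
`χ ((x ^ 2 + 1) * (x ^ 2 + 4 * x + 1)) = χ ((x + x⁻¹) ^ 2 + 4 * (x + x⁻¹))`, it turns the two sums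
into sums of `χ` over a cubic and a quartic in `t`. A Möbius transformation sending a root of the
quartic to infinity carries the quartic sum to the cubic one, up to the missing point at infinity,
which accounts for the difference `1`. Over `ZMod p` the sums omit `x = 0`, adding another `1`.
-/

open Finset

section QuadraticCharSums

variable {F : Type*} [Field F] [Fintype F] [DecidableEq F]

local notation "χ" => quadraticChar F

theorem quadraticChar_sq_mul {x : F} (hx : x ≠ 0) (y : F) : χ (x ^ 2 * y) = χ y := by
  rw [map_mul, quadraticChar_sq_one' hx, one_mul]

theorem card_filter_quadratic_eq_zero (hF : ringChar F ≠ 2) {a : F} (ha : a ≠ 0) (b c : F) :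
    (#{x : F | a * (x * x) + b * x + c = 0} : ℤ) = 1 + χ (discrim a b c) := by
  have : NeZero (2 : F) := ⟨Ring.two_ne_zero hF⟩
  have h2a : 2 * a ≠ 0 := mul_ne_zero two_ne_zero ha
  have hcard : #{x : F | a * (x * x) + b * x + c = 0} = #{s : F | s ^ 2 = discrim a b c} := by
    refine card_bij' (fun x _ ↦ 2 * a * x + b) (fun s _ ↦ (s - b) / (2 * a)) ?_ ?_ ?_ ?_
    · intro x hx
      simpa [quadratic_eq_zero_iff_discrim_eq_sq ha, eq_comm] using hx
    · intro s hs
      simp only [mem_filter, mem_univ, true_and] at hs ⊢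
      rw [quadratic_eq_zero_iff_discrim_eq_sq ha, mul_div_cancel₀ _ h2a, sub_add_cancel, hs]
    · intro x _
      field_simp
      ring
    · intro s _
      field_simp
      ring
  rw [hcard, ← Set.toFinset_ofPred, quadraticChar_card_sqrts hF, add_comm]

theorem sum_erase_zero_comp_add_inv (hF : ringChar F ≠ 2) (g : F → ℤ) :
    ∑ d ∈ univ.erase 0, g (d + d⁻¹) = ∑ t, (1 + χ (t ^ 2 - 4)) * g t := by
  rw [← sum_fiberwise' (univ.erase (0 : F)) (fun d ↦ d + d⁻¹) g]
  refine sum_congr rfl fun t _ ↦ ?_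
  -- `d + d⁻¹ = t` with `d ≠ 0` iff `d ^ 2 - t * d + 1 = 0`, and `0` is never a root
  have hfiber : {d ∈ univ.erase (0 : F) | d + d⁻¹ = t} =
      ({d | 1 * (d * d) + -t * d + 1 = 0} : Finset F) := by
    ext d
    simp only [mem_filter, mem_erase, mem_univ, and_true, true_and]
    constructor
    · rintro ⟨hd, rfl⟩
      field_simp
      ring
    · intro h
      have hd : d ≠ 0 := by rintro rfl; simp at h
      refine ⟨hd, ?_⟩
      field_simp
      linear_combination h
  rw [sum_const, hfiber, nsmul_eq_mul, card_filter_quadratic_eq_zero hF one_ne_zero, discrim]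
  ring_nf

theorem sum_quadraticChar_sq_sub_four (hF : ringChar F ≠ 2) : ∑ t : F, χ (t ^ 2 - 4) = -1 := by
  have h := sum_erase_zero_comp_add_inv hF fun _ ↦ 1
  simp only [mul_one, sum_const, card_erase_of_mem (mem_univ _), card_univ, sum_add_distrib,
    nsmul_eq_mul] at h
  have hq : 1 ≤ Fintype.card F := Fintype.card_pos
  push_cast [hq] at h
  linarith

theorem sum_quadraticChar_sq_add_four_mul (hF : ringChar F ≠ 2) :
    ∑ t : F, χ (t ^ 2 + 4 * t) = -1 := by
  rw [← sum_quadraticChar_sq_sub_four hF]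
  exact Fintype.sum_equiv (Equiv.addRight 2) _ _ fun t ↦ by simp only [Equiv.coe_addRight]; ring_nf

theorem quadraticChar_neg_one_mul_sum_cubic_eq (hF : ringChar F ≠ 2) :
    χ (-1) * ∑ x : F, χ (x ^ 3 + x ^ 2 + x) = ∑ t : F, χ ((t ^ 2 - 4) * (t - 1)) := by
  have hneg : χ (-1) * ∑ x : F, χ (x ^ 3 + x ^ 2 + x) = ∑ x : F, χ (x ^ 3 - x ^ 2 + x) := by
    rw [mul_sum]
    refine Fintype.sum_equiv (Equiv.neg F) _ _ fun x ↦ ?_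
    rw [← map_mul, Equiv.neg_apply]
    congr 1
    ring
  have hfactor : ∑ x : F, χ (x ^ 3 - x ^ 2 + x) = ∑ x ∈ univ.erase 0, χ (x + x⁻¹ - 1) := by
    rw [← add_sum_erase _ (fun x ↦ χ (x ^ 3 - x ^ 2 + x)) (mem_univ 0)]
    simp only [ne_eq, OfNat.ofNat_ne_zero, not_false_eq_true, zero_pow, sub_self, add_zero,
      MulChar.map_zero, zero_add]
    refine sum_congr rfl fun x hx ↦ ?_
    have hx : x ≠ 0 := ne_of_mem_erase hx
    rw [← quadraticChar_sq_mul hx (x + x⁻¹ - 1)]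
    congr 1
    field_simp
    ring
  rw [hneg, hfactor, sum_erase_zero_comp_add_inv hF fun t ↦ χ (t - 1)]
  simp only [add_mul, one_mul, sum_add_distrib, ← map_mul]
  rw [Fintype.sum_equiv (Equiv.subRight 1) (fun t ↦ χ (t - 1)) χ fun _ ↦ rfl,
    quadraticChar_sum_zero hF, zero_add]

theorem sum_quadraticChar_quartic_eq (hF : ringChar F ≠ 2) :
    ∑ x : F, χ ((x ^ 2 + 1) * (x ^ 2 + 4 * x + 1)) =
      ∑ t : F, χ ((t ^ 2 - 4) * (t ^ 2 + 4 * t)) := by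
  have hfactor : ∑ x : F, χ ((x ^ 2 + 1) * (x ^ 2 + 4 * x + 1))
      = 1 + ∑ x ∈ univ.erase (0 : F), χ ((x + x⁻¹) ^ 2 + 4 * (x + x⁻¹)) := by
    rw [← add_sum_erase _ (fun x ↦ χ ((x ^ 2 + 1) * (x ^ 2 + 4 * x + 1))) (mem_univ 0)]
    congr 1
    · simp
    refine sum_congr rfl fun x hx ↦ ?_
    have hx : x ≠ 0 := ne_of_mem_erase hx
    rw [← quadraticChar_sq_mul hx ((x + x⁻¹) ^ 2 + 4 * (x + x⁻¹))]
    congr 1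
    field_simp
    ring
  rw [hfactor, sum_erase_zero_comp_add_inv hF fun t ↦ χ (t ^ 2 + 4 * t)]
  simp only [add_mul, one_mul, sum_add_distrib, ← map_mul]
  rw [sum_quadraticChar_sq_add_four_mul hF]
  ring

theorem sum_quadraticChar_quartic_eq_sum_cubic (hF : ringChar F ≠ 2) (h3 : (3 : F) ≠ 0) :
    ∑ t : F, χ ((t ^ 2 - 4) * (t ^ 2 + 4 * t)) = ∑ v : F, χ ((v ^ 2 - 4) * (v - 1)) - 1 := by
  have h2 : (2 : F) ≠ 0 := Ring.two_ne_zero hF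
  have h6 : (6 : F) ≠ 0 := by
    rw [show (6 : F) = 2 * 3 by norm_num]
    exact mul_ne_zero h2 h3
  have h12 : (12 : F) ≠ 0 := by
    rw [show (12 : F) = 2 * 6 by norm_num]
    exact mul_ne_zero h2 h6
  -- `σ t = 4 + 12 / (t - 2)` maps the roots `2, -2, 0, -4` of the quartic to `∞, 1, -2, 2`.
  let σ : Equiv.Perm F :=
    ((Equiv.subRight 2).trans (Equiv.inv F)).trans
      ((Equiv.mulRight₀ 12 h12).trans (Equiv.addRight 4))
  have hσ : ∀ t, σ t = (t - 2)⁻¹ * 12 + 4 := fun _ ↦ rfl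
  have hpoint : ∀ t : F, χ ((t ^ 2 - 4) * (t ^ 2 + 4 * t))
      = χ (((σ t) ^ 2 - 4) * (σ t - 1)) - if t = 2 then 1 else 0 := by
    intro t
    rw [hσ]
    split_ifs with ht
    · subst ht
      have h36 : (((2 - 2 : F)⁻¹ * 12 + 4) ^ 2 - 4) * ((2 - 2 : F)⁻¹ * 12 + 4 - 1) = 6 ^ 2 * 1 := by
        norm_num
      rw [h36, quadraticChar_sq_mul h6]
      norm_num
    · have hw : t - 2 ≠ 0 := sub_ne_zero.mpr ht
      rw [sub_zero, ← quadraticChar_sq_mul (div_ne_zero h6 (pow_ne_zero 2 hw))]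
      congr 1
      field_simp
      ring
  rw [sum_congr rfl fun t _ ↦ hpoint t, sum_sub_distrib,
    Equiv.sum_comp σ fun v ↦ χ ((v ^ 2 - 4) * (v - 1)), sum_ite_eq']
  simp

theorem quadraticChar_sum_cubic_sub_sum_quartic (hF : ringChar F ≠ 2) (h3 : (3 : F) ≠ 0) :
    χ (-1) * ∑ x : F, χ (x ^ 3 + x ^ 2 + x) -
      ∑ x : F, χ ((x ^ 2 + 1) * (x ^ 2 + 4 * x + 1)) = 1 := by
  rw [quadraticChar_neg_one_mul_sum_cubic_eq hF, sum_quadraticChar_quartic_eq hF,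
    sum_quadraticChar_quartic_eq_sum_cubic hF h3, sub_sub_cancel]

end QuadraticCharSums

theorem ZMod.sum_Icc_natCast_eq_sum_erase_zero {M : Type*} [AddCommMonoid M] (p : ℕ) [NeZero p]
    (f : ZMod p → M) : ∑ c ∈ Icc 1 (p - 1), f c = ∑ x ∈ univ.erase 0, f x := by
  refine sum_nbij' (fun c ↦ (c : ZMod p)) ZMod.val (fun c hc ↦ ?_) (fun x hx ↦ ?_)
    (fun c hc ↦ ?_) (fun x _ ↦ ZMod.natCast_zmod_val x) (fun _ _ ↦ rfl)
  · obtain ⟨hc1, hcp⟩ := mem_Icc.mp hc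
    rw [mem_erase, Ne, ZMod.natCast_eq_zero_iff]
    exact ⟨fun h ↦ by have := Nat.le_of_dvd hc1 h; omega, mem_univ _⟩
  · rw [mem_Icc]
    have := ZMod.val_lt x
    have := (ZMod.val_ne_zero x).mpr (ne_of_mem_erase hx)
    omega
  · exact ZMod.val_cast_of_lt (by have := (mem_Icc.mp hc).2; have := NeZero.pos p; omega)

theorem stmt1 (p : ℕ) [hp : Fact p.Prime] (hodd : Odd p) :
    (legendreSym p (-1)) * (∑ c ∈ Finset.Icc 1 (p - 1),
        legendreSym p ((c : ℤ) ^ 3 + (c : ℤ) ^ 2 + (c : ℤ)))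
      - ∑ b ∈ Finset.Icc 1 (p - 1),
        legendreSym p ((((b : ℤ) ^ 2 + 1) * ((b : ℤ) ^ 2 + 4 * (b : ℤ) + 1)))
    = 2 := by
  rcases eq_or_ne p 3 with rfl | hp3
  · obtain rfl : hp = Nat.fact_prime_three := Subsingleton.elim _ _
    decide
  have hF : ringChar (ZMod p) ≠ 2 := by
    rw [ZMod.ringChar_zmod_n]
    rintro rfl
    exact absurd hodd (by decide)
  have h3 : (3 : ZMod p) ≠ 0 := by
    rw [show (3 : ZMod p) = (3 : ℕ) by norm_cast, Ne, ZMod.natCast_eq_zero_iff,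
      Nat.prime_dvd_prime_iff_eq hp.out Nat.prime_three]
    exact hp3
  simp only [legendreSym]
  push_cast
  rw [ZMod.sum_Icc_natCast_eq_sum_erase_zero p fun x ↦ quadraticChar (ZMod p) (x ^ 3 + x ^ 2 + x),
    ZMod.sum_Icc_natCast_eq_sum_erase_zero p fun x ↦
      quadraticChar (ZMod p) ((x ^ 2 + 1) * (x ^ 2 + 4 * x + 1)),
    sum_erase_eq_sub (mem_univ _), sum_erase_eq_sub (mem_univ _)]
  simp only [ne_eq, OfNat.ofNat_ne_zero, not_false_eq_true, zero_pow, zero_add, add_zero, mul_zero,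
    mul_one, MulChar.map_zero, MulChar.map_one, sub_zero]
  linarith [quadraticChar_sum_cubic_sub_sum_quartic hF h3]
end

section
/- Let p be a prime with p ≡ 5 (mod 6), and let n be an integer with p ∤ n. Then ∑_{m=1}^{p-1} |∑_{a=0}^{p-1} e((m a³ + n a)/p)|⁶ = 5p³(p − 1). -/
/-!
Put `S(m, n) = ∑ₐ e((m a³ + n a)/p)` and `M(n) = ∑ₘ |S(m, n)|⁶` over all residues `m`; the term
`m = 0` vanishes since `n ≢ 0`. Substituting `a ↦ λa` gives `S(m, n) = S(mλ³, nλ)`, so `M` is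
constant on `n ≢ 0`. Orthogonality in both `m` and `n` gives `∑ₙ M(n) = p² N`, where `N` counts
pairs of triples with equal sums and equal sums of cubes, while `M(0) = p⁶` because cubing permutes
`𝔽_p` when `p ≡ 2 (mod 3)`. Hence `(p - 1) M(n) = p² N - p⁶`.

For triples with a common sum `s`, `s³ - (x³ + y³ + z³) = 3 (y + z)(z + x)(x + y)`, so the
substitution `(x, y, z) ↦ (y + z, z + x, x + y)` turns `N` into the number of pairs of triples with
equal sums and equal products. Once the sum condition is solved for one coordinate, the product
condition is linear in another, and counting its solutions gives `N = p⁴ + 5p(p - 1)²`.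
-/

open Finset

lemma sum_ite_eq_else {α : Type*} [Fintype α] [DecidableEq α] (c : α) (A B : ℤ) :
    ∑ x : α, (if x = c then A else B) = A + (Fintype.card α - 1) * B := by
  have h : ∀ x : α, (if x = c then A else B) = B + if x = c then A - B else 0 := by
    intro x; split_ifs <;> ring
  simp only [h, sum_add_distrib, sum_ite_eq', mem_univ, if_true, sum_const, card_univ,
    nsmul_eq_mul]
  ring

section Collisions

variable {α β γ : Type*} [Fintype α] [DecidableEq β] [DecidableEq γ]

def collisionCount (f : α → β) : ℕ := #{p : α × α | f p.1 = f p.2}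

lemma collisionCount_eq_sum {R : Type*} [AddCommMonoidWithOne R] (f : α → β) :
    (collisionCount f : R) = ∑ a, ∑ b, if f a = f b then 1 else 0 := by
  rw [collisionCount, ← sum_boole, ← univ_product_univ, sum_product]

lemma collisionCount_comp_of_injective {g : β → γ} (hg : g.Injective) (f : α → β) :
    collisionCount (g ∘ f) = collisionCount f := by
  simp [collisionCount, hg.eq_iff]

lemma collisionCount_comp_equiv {α' : Type*} [Fintype α'] (e : α' ≃ α) (f : α → β) :
    collisionCount (f ∘ e) = collisionCount f := by
  rw [collisionCount, collisionCount, ← card_map (e.prodCongr e).toEmbedding, map_filter]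
  congr 1
  ext ⟨a, b⟩
  simp

end Collisions

section Triples

variable {R : Type*} [CommRing R]

def tripleSum (t : R × R × R) : R := t.1 + t.2.1 + t.2.2

def tripleProd (t : R × R × R) : R := t.1 * t.2.1 * t.2.2

def tripleCubeSum (t : R × R × R) : R := t.1 ^ 3 + t.2.1 ^ 3 + t.2.2 ^ 3

variable {F : Type*} [Field F]

def pairwiseSumEquiv (h2 : (2 : F) ≠ 0) : F × F × F ≃ F × F × F where
  toFun t := (t.2.1 + t.2.2, t.2.2 + t.1, t.1 + t.2.1)
  invFun t := (tripleSum t / 2 - t.1, tripleSum t / 2 - t.2.1, tripleSum t / 2 - t.2.2)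
  left_inv := by
    rintro ⟨x, y, z⟩
    simp only [tripleSum, Prod.mk.injEq]
    refine ⟨?_, ?_, ?_⟩ <;> field_simp <;> ring
  right_inv := by
    rintro ⟨x, y, z⟩
    simp only [tripleSum, Prod.mk.injEq]
    refine ⟨?_, ?_, ?_⟩ <;> field_simp <;> ring

lemma tripleSum_pairwiseSumEquiv (h2 : (2 : F) ≠ 0) (t : F × F × F) :
    tripleSum (pairwiseSumEquiv h2 t) = 2 * tripleSum t := by
  simp only [pairwiseSumEquiv, tripleSum, Equiv.coe_fn_mk]
  ring

lemma three_mul_tripleProd_pairwiseSumEquiv (h2 : (2 : F) ≠ 0) (t : F × F × F) :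
    3 * tripleProd (pairwiseSumEquiv h2 t) = tripleSum t ^ 3 - tripleCubeSum t := by
  simp only [pairwiseSumEquiv, tripleSum, tripleProd, tripleCubeSum, Equiv.coe_fn_mk]
  ring

lemma collisionCount_tripleCubeSum_tripleSum [Fintype F] [DecidableEq F] (h2 : (2 : F) ≠ 0)
    (h3 : (3 : F) ≠ 0) :
    collisionCount (fun t : F × F × F => (tripleCubeSum t, tripleSum t)) =
      collisionCount (fun t : F × F × F => (tripleSum t, tripleProd t)) := by
  set G : F × F → F × F := fun c => (2 * c.2, (c.2 ^ 3 - c.1) / 3)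
  have hG : G.Injective := by
    rintro ⟨a, b⟩ ⟨a', b'⟩ h
    simp only [G, Prod.mk.injEq, mul_right_inj' h2, div_left_inj' h3] at h
    obtain ⟨rfl, h⟩ := h
    simpa using h
  have hcomp : (fun t => (tripleSum t, tripleProd t)) ∘ pairwiseSumEquiv h2 =
      G ∘ fun t => (tripleCubeSum t, tripleSum t) := by
    ext t
    · simp [G, tripleSum_pairwiseSumEquiv]
    · simp only [Function.comp_apply, G]
      rw [eq_div_iff h3, mul_comm, three_mul_tripleProd_pairwiseSumEquiv]
  rw [← collisionCount_comp_of_injective hG, ← hcomp, collisionCount_comp_equiv]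

end Triples

section Counting

variable {F : Type*} [Field F] [Fintype F] [DecidableEq F]

local notation "q" => (Fintype.card F : ℤ)

lemma sum_ite_mul_eq (a b : F) :
    ∑ x : F, (if a * x = b then (1 : ℤ) else 0) = if a = 0 then (if b = 0 then q else 0) else 1 := by
  rcases eq_or_ne a 0 with rfl | ha
  · by_cases hb : b = 0 <;> simp [hb, eq_comm]
  · simp [← eq_div_iff ha, mul_comm a, ha]

lemma sum_sum_ite_mul_eq (c : F) :
    ∑ x : F, ∑ y : F, (if x * y = c then (1 : ℤ) else 0) = q - 1 + if c = 0 then q else 0 := by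
  simp_rw [sum_ite_mul_eq, sum_ite_eq_else]
  ring

lemma sum_sum_ite_mul_eq_and_add_eq (x y : F) :
    ∑ u : F, ∑ v : F, (if u * v = x * y ∧ u + v = x + y then (1 : ℤ) else 0) =
      if x = y then 1 else 2 := by
  have key : ∀ u v : F, (u * v = x * y ∧ u + v = x + y) ↔ (v = x + y - u ∧ (u = x ∨ u = y)) := by
    intro u v
    constructor
    · rintro ⟨hm, hs⟩
      obtain rfl : v = x + y - u := by linear_combination hs
      have : (u - x) * (u - y) = 0 := by linear_combination -hm
      exact ⟨rfl, (mul_eq_zero.mp this).imp sub_eq_zero.mp sub_eq_zero.mp⟩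
    · rintro ⟨rfl, rfl | rfl⟩ <;> constructor <;> ring
  simp_rw [key, ite_and, sum_ite_eq', mem_univ, if_true, sum_boole, filter_or, filter_eq',
    mem_univ, if_true]
  split_ifs with h
  · simp [h]
  · simp [card_pair h]

lemma sum_sum_ite_mul_eq_and_mul_mul_eq_zero (x y : F) :
    ∑ u : F, ∑ v : F, (if u * v = x * y ∧ u * v * (u + v - x - y) = 0 then (1 : ℤ) else 0) =
      if x * y = 0 then 2 * q - 1 else if x = y then 1 else 2 := by
  rcases eq_or_ne (x * y) 0 with hxy | hxy
  · have key : ∀ u v : F, (u * v = x * y ∧ u * v * (u + v - x - y) = 0) ↔ u * v = 0 := by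
      intro u v
      rw [hxy]
      exact ⟨And.left, fun h => ⟨h, by rw [h, zero_mul]⟩⟩
    simp_rw [key, sum_sum_ite_mul_eq, hxy, if_true]
    ring
  · have key : ∀ u v : F,
        (u * v = x * y ∧ u * v * (u + v - x - y) = 0) ↔ (u * v = x * y ∧ u + v = x + y) := by
      intro u v
      refine and_congr_right fun h => ?_
      rw [h, mul_eq_zero, or_iff_right hxy, sub_sub, sub_eq_zero]
    simp_rw [key, sum_sum_ite_mul_eq_and_add_eq, if_neg hxy]

lemma sum_ite_add_add_eq_and_mul_mul_eq (x y : F) :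
    ∑ z : F, ∑ u : F, ∑ v : F, ∑ w : F,
        (if x + y + z = u + v + w ∧ x * y * z = u * v * w then (1 : ℤ) else 0) =
      q ^ 2 - (q - 1 + if x * y = 0 then q else 0) +
        q * ∑ u : F, ∑ v : F, (if u * v = x * y ∧ u * v * (u + v - x - y) = 0 then 1 else 0) := by
  have hzw : ∀ u v : F, ∑ z : F, ∑ w : F,
      (if x + y + z = u + v + w ∧ x * y * z = u * v * w then (1 : ℤ) else 0) =
        1 - (if u * v = x * y then 1 else 0) +
          q * if u * v = x * y ∧ u * v * (u + v - x - y) = 0 then 1 else 0 := by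
    intro u v
    have key : ∀ z w : F, (x + y + z = u + v + w ∧ x * y * z = u * v * w) ↔
        (w = x + y + z - u - v ∧ (u * v - x * y) * z = u * v * (u + v - x - y)) := by
      intro z w
      constructor
      · rintro ⟨hs, hp⟩
        obtain rfl : w = x + y + z - u - v := by linear_combination -hs
        exact ⟨rfl, by linear_combination -hp⟩
      · rintro ⟨rfl, hp⟩
        exact ⟨by ring, by linear_combination -hp⟩
    simp_rw [key, ite_and, sum_ite_eq', mem_univ, if_true, sum_ite_mul_eq, sub_eq_zero]
    split_ifs <;> ring
  rw [sum_comm]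
  refine (sum_congr rfl fun u _ => (sum_comm.trans (sum_congr rfl fun v _ => hzw u v))).trans ?_
  simp only [sum_add_distrib, sum_sub_distrib, ← mul_sum, sum_sum_ite_mul_eq, sum_const, card_univ,
    nsmul_eq_mul, mul_one]
  ring

lemma collisionCount_tripleSum_tripleProd :
    (collisionCount (fun t : F × F × F => (tripleSum t, tripleProd t)) : ℤ) =
      q ^ 4 + 5 * q * (q - 1) ^ 2 := by
  have hpt : ∀ x y : F, q ^ 2 - (q - 1 + if x * y = 0 then q else 0) +
      q * (if x * y = 0 then 2 * q - 1 else if x = y then 1 else 2) =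
        q ^ 2 + q + 1 + (2 * q ^ 2 - 4 * q) * (if x * y = 0 then 1 else 0) -
          q * if y = x ∧ x * y ≠ 0 then 1 else 0 := by
    intro x y
    by_cases hxy : x * y = 0
    · simp only [hxy, if_true, ne_eq, not_true_eq_false, and_false, if_false]; ring
    · by_cases h : y = x
      · subst h; simp only [hxy, if_false, ne_eq, not_false_eq_true, and_true, if_true]; ring
      · simp only [hxy, h, Ne.symm h, if_false, false_and]; ring
  rw [collisionCount_eq_sum]
  simp only [Fintype.sum_prod_type, tripleSum, tripleProd, Prod.mk.injEq]
  simp_rw [sum_ite_add_add_eq_and_mul_mul_eq, sum_sum_ite_mul_eq_and_mul_mul_eq_zero, hpt,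
    sum_sub_distrib, sum_add_distrib, ← mul_sum, sum_sum_ite_mul_eq, ite_and, sum_ite_eq',
    mem_univ, if_true, ne_eq, mul_self_eq_zero, ite_not, sum_ite_eq_else]
  simp only [sum_const, card_univ, nsmul_eq_mul]
  ring

end Counting

section CubicSum

variable {R : Type*} [CommRing R] [Fintype R] (ψ : AddChar R ℂ)

def cubicSum (m n : R) : ℂ := ∑ x, ψ (m * x ^ 3 + n * x)

lemma cubicSum_pow_three (m n : R) :
    cubicSum ψ m n ^ 3 = ∑ t : R × R × R, ψ (m * tripleCubeSum t + n * tripleSum t) := by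
  simp only [cubicSum, pow_three, Fintype.sum_prod_type, sum_mul, mul_sum,
    ← AddChar.map_add_eq_mul, tripleCubeSum, tripleSum]
  refine sum_congr rfl fun x _ => sum_congr rfl fun y _ => sum_congr rfl fun z _ => ?_
  congr 1
  ring

variable {ψ} [DecidableEq R]

lemma sum_sum_norm_sq_eq_collisionCount (hψ : ψ.IsPrimitive) {α : Type*} [Fintype α]
    (f : α → R × R) :
    ∑ m : R, ∑ n : R, ‖∑ a, ψ (m * (f a).1 + n * (f a).2)‖ ^ 2 =
      (Fintype.card R : ℝ) ^ 2 * collisionCount f := by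
  apply Complex.ofReal_injective
  push_cast
  simp_rw [← Complex.mul_conj', map_sum, ← AddChar.map_neg_eq_conj, sum_mul_sum,
    ← AddChar.map_add_eq_mul]
  have hab : ∀ a b : α, ∑ m : R, ∑ n : R,
      ψ (m * (f a).1 + n * (f a).2 + -(m * (f b).1 + n * (f b).2)) =
        (Fintype.card R : ℂ) ^ 2 * if f a = f b then 1 else 0 := by
    intro a b
    have h : ∀ m n : R, ψ (m * (f a).1 + n * (f a).2 + -(m * (f b).1 + n * (f b).2)) =
        ψ (m * ((f a).1 - (f b).1)) * ψ (n * ((f a).2 - (f b).2)) := by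
      intro m n
      rw [← AddChar.map_add_eq_mul]
      congr 1
      ring
    simp_rw [h, ← mul_sum, ← sum_mul, AddChar.sum_mulShift _ hψ, sub_eq_zero, Prod.ext_iff]
    split_ifs <;> simp_all [sq]
  simp_rw [collisionCount_eq_sum, mul_sum]
  rw [← Fintype.sum_prod_type', sum_comm]
  refine sum_congr rfl fun a _ => ?_
  rw [sum_comm]
  refine sum_congr rfl fun b _ => ?_
  rw [Fintype.sum_prod_type, hab]

lemma sum_sum_norm_cubicSum_pow_six (hψ : ψ.IsPrimitive) :
    ∑ m : R, ∑ n : R, ‖cubicSum ψ m n‖ ^ 6 = (Fintype.card R : ℝ) ^ 2 *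
      collisionCount (fun t : R × R × R => (tripleCubeSum t, tripleSum t)) := by
  have h : ∀ m n : R, ‖cubicSum ψ m n‖ ^ 6 =
      ‖∑ t : R × R × R, ψ (m * tripleCubeSum t + n * tripleSum t)‖ ^ 2 := by
    intro m n
    rw [← cubicSum_pow_three, norm_pow, ← pow_mul]
  simp_rw [h]
  exact sum_sum_norm_sq_eq_collisionCount hψ fun t => (tripleCubeSum t, tripleSum t)

lemma cubicSum_zero_left (hψ : ψ.IsPrimitive) {n : R} (hn : n ≠ 0) :
    cubicSum ψ 0 n = 0 := by
  simp [cubicSum, mul_comm n, AddChar.sum_mulShift _ hψ, hn]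

lemma cubicSum_zero_right (hψ : ψ.IsPrimitive)
    (hcube : Function.Bijective fun x : R => x ^ 3) (m : R) :
    cubicSum ψ m 0 = if m = 0 then (Fintype.card R : ℂ) else 0 := by
  simp only [cubicSum, zero_mul, add_zero]
  rw [hcube.sum_comp fun y => ψ (m * y)]
  simp_rw [mul_comm m]
  exact_mod_cast AddChar.sum_mulShift m hψ

end CubicSum

section FiniteField

variable {F : Type*} [Field F] [Fintype F] {ψ : AddChar F ℂ}

lemma pow_bijective_of_coprime_card_sub_one {k : ℕ} (hk : k ≠ 0)
    (hcop : (Fintype.card F - 1).Coprime k) : Function.Bijective fun x : F => x ^ k := by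
  classical
  rw [← Finite.injective_iff_bijective]
  intro x y hxy
  simp only at hxy
  rcases eq_or_ne y 0 with rfl | hy
  · rwa [zero_pow hk, pow_eq_zero_iff hk] at hxy
  have hx : x ≠ 0 := by rintro rfl; exact hy ((pow_eq_zero_iff hk).mp (by rw [← hxy, zero_pow hk]))
  have hunits : (Nat.card Fˣ).Coprime k := by rwa [Nat.card_eq_fintype_card, Fintype.card_units]
  have := hunits.pow_left_bijective.injective (a₁ := Units.mk0 x hx) (a₂ := Units.mk0 y hy)
    (Units.ext (by simpa using hxy))
  simpa using congrArg Units.val this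

lemma cubicSum_mul_pow_three_mul {l : F} (hl : l ≠ 0) (m n : F) :
    cubicSum ψ (m * l ^ 3) (n * l) = cubicSum ψ m n := by
  rw [cubicSum, cubicSum, ← (mulLeft_bijective₀ l hl).sum_comp fun y => ψ (m * y ^ 3 + n * y)]
  congr! 2 with x
  ring

lemma sum_norm_cubicSum_pow_six_mul {l : F} (hl : l ≠ 0) (n : F) :
    ∑ m, ‖cubicSum ψ m (n * l)‖ ^ 6 = ∑ m, ‖cubicSum ψ m n‖ ^ 6 := by
  rw [← (mulRight_bijective₀ (l ^ 3) (pow_ne_zero 3 hl)).sum_comp]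
  simp_rw [cubicSum_mul_pow_three_mul hl]

theorem sum_norm_cubicSum_pow_six [DecidableEq F] (hψ : ψ.IsPrimitive) (h2 : (2 : F) ≠ 0)
    (h3 : (3 : F) ≠ 0) (hcube : Function.Bijective fun x : F => x ^ 3) {n : F} (hn : n ≠ 0) :
    ∑ m, ‖cubicSum ψ m n‖ ^ 6 = 5 * (Fintype.card F : ℝ) ^ 3 * (Fintype.card F - 1) := by
  set q : ℝ := (Fintype.card F : ℝ)
  set M : F → ℝ := fun n => ∑ m, ‖cubicSum ψ m n‖ ^ 6
  have hconst : ∀ n' ≠ 0, M n' = M n := fun n' hn' => by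
    simpa [M, mul_div_cancel₀ _ hn] using sum_norm_cubicSum_pow_six_mul (div_ne_zero hn' hn) n
  have hzero : M 0 = q ^ 6 := by
    simp only [M, cubicSum_zero_right hψ hcube]
    rw [Fintype.sum_eq_single (0 : F) fun m hm => by simp [hm]]
    simp [q]
  have htotal : ∑ n', M n' = q ^ 2 * (q ^ 4 + 5 * q * (q - 1) ^ 2) := by
    have hcount := congrArg (Int.cast : ℤ → ℝ) (collisionCount_tripleSum_tripleProd (F := F))
    push_cast at hcount
    rw [sum_comm, sum_sum_norm_cubicSum_pow_six hψ,
      collisionCount_tripleCubeSum_tripleSum h2 h3, hcount]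
  have hsplit : ∑ n', M n' = M 0 + (q - 1) * M n := by
    rw [← add_sum_erase _ _ (mem_univ 0),
      sum_congr rfl fun n' hn' => hconst n' (ne_of_mem_erase hn'), sum_const,
      card_erase_of_mem (mem_univ 0), card_univ, nsmul_eq_mul, Nat.cast_pred Fintype.card_pos]
  have hq : q - 1 ≠ 0 := sub_ne_zero.mpr (Nat.one_lt_cast.mpr Fintype.one_lt_card).ne'
  apply mul_left_cancel₀ hq
  linear_combination hsplit.symm.trans htotal - hzero

end FiniteField

lemma sum_range_eq_sum_zmod {M : Type*} [AddCommMonoid M] (p : ℕ) [NeZero p] (f : ZMod p → M) :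
    ∑ a ∈ range p, f a = ∑ x : ZMod p, f x :=
  sum_nbij' (↑) ZMod.val (fun _ _ => mem_univ _) (fun x _ => mem_range.mpr (ZMod.val_lt x))
    (fun _ ha => ZMod.val_natCast_of_lt (mem_range.mp ha)) (fun x _ => ZMod.natCast_zmod_val x)
    fun _ _ => rfl

lemma sum_range_exp_eq_cubicSum (p : ℕ) [NeZero p] (m : ℕ) (n : ℤ) :
    ∑ a ∈ range p,
        Complex.exp (2 * Real.pi * Complex.I * ((m : ℂ) * (a : ℂ) ^ 3 + (n : ℂ) * (a : ℂ)) / p) =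
      cubicSum ZMod.stdAddChar (m : ZMod p) (n : ZMod p) := by
  rw [cubicSum, ← sum_range_eq_sum_zmod]
  refine sum_congr rfl fun a _ => ?_
  have := ZMod.stdAddChar_coe (N := p) (m * a ^ 3 + n * a)
  push_cast at this
  exact this.symm

theorem stmt9 (p : ℕ) (hp : p.Prime) (n : ℤ) (hn : ¬ (p : ℤ) ∣ n) (hmod : p % 6 = 5) :
    ∑ m ∈ Finset.Icc 1 (p - 1),
      ‖∑ a ∈ Finset.range p, Complex.exp (2 * Real.pi * Complex.I * ((m : ℂ) * (a : ℂ) ^ 3 + (n : ℂ) * (a : ℂ)) / p)‖ ^ 6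
    = 5 * (p : ℝ) ^ 3 * ((p : ℝ) - 1) := by
  have := Fact.mk hp
  have hsmall : ∀ k : ℕ, 0 < k → k < p → (k : ZMod p) ≠ 0 := fun k hk hkp => by
    rw [Ne, ZMod.natCast_eq_zero_iff]
    exact Nat.not_dvd_of_pos_of_lt hk hkp
  have h2 : (2 : ZMod p) ≠ 0 := by exact_mod_cast hsmall 2 (by norm_num) (by omega)
  have h3 : (3 : ZMod p) ≠ 0 := by exact_mod_cast hsmall 3 (by norm_num) (by omega)
  have hcube : Function.Bijective fun x : ZMod p => x ^ 3 :=
    pow_bijective_of_coprime_card_sub_one (by norm_num) <| by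
      rw [ZMod.card, Nat.coprime_comm, Nat.Prime.coprime_iff_not_dvd Nat.prime_three]
      omega
  have hn' : (n : ZMod p) ≠ 0 := by rwa [Ne, ZMod.intCast_zmod_eq_zero_iff_dvd]
  have hψ := ZMod.isPrimitive_stdAddChar p
  simp_rw [sum_range_exp_eq_cubicSum]
  have hsub : Icc 1 (p - 1) ⊆ range p := fun m hm => by rw [mem_Icc] at hm; rw [mem_range]; omega
  rw [sum_subset hsub fun m hm hm' => by
      obtain rfl : m = 0 := by rw [mem_Icc] at hm'; rw [mem_range] at hm; omega
      simp [cubicSum_zero_left hψ hn'],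
    sum_range_eq_sum_zmod p fun m => ‖cubicSum ZMod.stdAddChar m (n : ZMod p)‖ ^ 6,
    sum_norm_cubicSum_pow_six hψ h2 h3 hcube hn', ZMod.card]
end
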